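/- arXiv:2302.00400 — 2 statements merged into one kernel-verified Lean document; each statement's English description precedes it below -/
import Mathlib

section
/- Let M = (M_i)_{i∈I} be a POVM on ℂ^d, let λ = (λ_k)_{k=1}^K be a probability distribution, and let ρ_k be a quantum state for each k. Then the observational entropy satisfies 0 ≤ S_M(∑_k λ_k ρ_k) − ∑_k λ_k S_M(ρ_k) ≤ H(λ). -/
open scoped BigOperators ComplexOrder Classical

noncomputable section

/-- Shannon entropy of a finitely supported distribution, with `0 log 0 = 0`. -/
def shannonEntropy {ι : Type*} [Fintype ι] (p : ι → ℝ) : ℝ :=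
  -∑ i, p i * Real.log (p i)

/-- A quantum state: positive semidefinite with unit trace. -/
def IsState {n : Type*} [Fintype n] (ρ : Matrix n n ℂ) : Prop :=
  ρ.PosSemidef ∧ ρ.trace = 1

/-- A POVM: positive semidefinite elements summing to the identity. -/
def IsPOVM {ι n : Type*} [Fintype ι] [Fintype n] [DecidableEq n]
    (M : ι → Matrix n n ℂ) : Prop :=
  (∀ i, (M i).PosSemidef) ∧ ∑ i, M i = 1

/-- Observational entropy `S_M(ρ) = -∑ p_i log (p_i / V_i)`. -/
def obsEntropy {ι n : Type*} [Fintype ι] [Fintype n]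
    (M : ι → Matrix n n ℂ) (ρ : Matrix n n ℂ) : ℝ :=
  -∑ i, ((M i * ρ).trace.re * Real.log ((M i * ρ).trace.re / (M i).trace.re))

/-- The function `g(x) = -x log x + (1+x) log(1+x)`. -/
def gFun (x : ℝ) : ℝ := -(x * Real.log x) + (1 + x) * Real.log (1 + x)

/-- Trace norm of a square complex matrix. -/
def traceNorm {n : Type*} [Fintype n] [DecidableEq n] (X : Matrix n n ℂ) : ℝ :=
  (((Matrix.posSemidef_conjTranspose_mul_self X).1.eigenvectorUnitary : Matrix n n ℂ) *
    Matrix.diagonal (fun i => ((Real.sqrt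
      ((Matrix.posSemidef_conjTranspose_mul_self X).1.eigenvalues i) : ℝ) : ℂ)) *
    (star ((Matrix.posSemidef_conjTranspose_mul_self X).1.eigenvectorUnitary :
      Matrix n n ℂ))).trace.re

/-- Matrix logarithm of a Hermitian matrix via the spectral decomposition,
with the convention `log 0 = 0` on the kernel; junk value `0` on non-Hermitian input. -/
def matLog {n : Type*} [Fintype n] [DecidableEq n] (A : Matrix n n ℂ) : Matrix n n ℂ :=
  if hA : A.IsHermitian then
    (hA.eigenvectorUnitary : Matrix n n ℂ) *
      Matrix.diagonal (fun i => (Real.log (hA.eigenvalues i) : ℂ)) *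
      (star (hA.eigenvectorUnitary : Matrix n n ℂ))
  else 0

/-- Von Neumann entropy `S(ρ) = -tr(ρ log ρ)`. -/
def vnEntropy {n : Type*} [Fintype n] [DecidableEq n] (ρ : Matrix n n ℂ) : ℝ :=
  -((ρ * matLog ρ).trace.re)

/-- Quantum relative entropy, as an extended real number: `tr(μ (log μ - log ν))` when
`supp μ ⊆ supp ν` (both Hermitian), and `+∞` otherwise. -/
def qRelEntropy {n : Type*} [Fintype n] [DecidableEq n] (μ ν : Matrix n n ℂ) : EReal :=
  if μ.IsHermitian ∧ ν.IsHermitian ∧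
      LinearMap.range (Matrix.toLin' μ) ≤ LinearMap.range (Matrix.toLin' ν) then
    (((μ * (matLog μ - matLog ν)).trace.re : ℝ) : EReal)
  else ⊤

/-- Real-valued quantum relative entropy `tr(μ (log μ - log ν))` (meaningful when
`supp μ ⊆ supp ν`). -/
def qRelEntropyR {n : Type*} [Fintype n] [DecidableEq n] (μ ν : Matrix n n ℂ) : ℝ :=
  (μ * (matLog μ - matLog ν)).trace.re

/-!
Write `p = (tr (M_i ρ))_i` for the outcome distribution and `V_i = tr M_i`. Then
`S_M(ρ) = H(p) + ∑_i p_i log V_i`, where `V_i = 0` forces `M_i = 0` and hence `p_i = 0`.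
Both `ρ ↦ p` and the second term are linear, so the gap in question is the Shannon gap
`H(∑_k λ_k p^k) - ∑_k λ_k H(p^k)`. It is nonnegative by concavity of `-x log x`, and at most
`H(λ)` because `-x log x` is subadditive on `[0, ∞)` and
`-(λ q) log (λ q) = -λ q log q - q λ log λ`.
-/

open Real Finset

lemma Real.negMulLog_sum_le {κ : Type*} {s : Finset κ} {q : κ → ℝ} (hq : ∀ k ∈ s, 0 ≤ q k) :
    negMulLog (∑ k ∈ s, q k) ≤ ∑ k ∈ s, negMulLog (q k) := by
  rw [negMulLog, ← sum_neg_distrib, sum_mul]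
  refine sum_le_sum fun k hk => ?_
  rcases (hq k hk).eq_or_lt with hk0 | hkpos
  · simp [← hk0]
  rw [negMulLog, neg_mul, neg_mul, neg_le_neg_iff]
  exact mul_le_mul_of_nonneg_left (log_le_log hkpos (single_le_sum hq hk)) hkpos.le

open scoped MatrixOrder in
lemma Matrix.PosSemidef.trace_mul_nonneg {𝕜 n : Type*} [RCLike 𝕜] [Fintype n]
    {A B : Matrix n n 𝕜} (hA : A.PosSemidef) (hB : B.PosSemidef) : 0 ≤ (A * B).trace := by
  obtain ⟨X, rfl⟩ := CStarAlgebra.nonneg_iff_eq_star_mul_self.mp hA.nonneg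
  rw [mul_assoc, Matrix.trace_mul_comm, Matrix.star_eq_conjTranspose]
  exact (hB.mul_mul_conjTranspose_same X).trace_nonneg

section ShannonEntropy

variable {ι κ : Type*} [Fintype ι] [Fintype κ]

lemma shannonEntropy_eq_sum_negMulLog (p : ι → ℝ) : shannonEntropy p = ∑ i, negMulLog (p i) := by
  simp [shannonEntropy, negMulLog]

lemma concaveOn_shannonEntropy : ConcaveOn ℝ (Set.Ici 0) (shannonEntropy (ι := ι)) := by
  refine ⟨convex_Ici 0, fun p hp q hq a b ha hb hab => ?_⟩
  simp only [shannonEntropy_eq_sum_negMulLog, smul_eq_mul, mul_sum, ← sum_add_distrib,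
    Pi.add_apply, Pi.smul_apply]
  exact sum_le_sum fun i _ => concaveOn_negMulLog.2 (hp i) (hq i) ha hb hab

lemma shannonEntropy_sum_smul_le {w : κ → ℝ} {p : κ → ι → ℝ} (hw : ∀ k, 0 ≤ w k)
    (hp : ∀ k i, 0 ≤ p k i) (hp1 : ∀ k, ∑ i, p k i = 1) :
    shannonEntropy (∑ k, w k • p k) ≤ ∑ k, w k * shannonEntropy (p k) + shannonEntropy w := by
  calc shannonEntropy (∑ k, w k • p k) = ∑ i, negMulLog (∑ k, w k * p k i) := by
        simp [shannonEntropy_eq_sum_negMulLog]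
    _ ≤ ∑ i, ∑ k, negMulLog (w k * p k i) :=
        sum_le_sum fun i _ => negMulLog_sum_le fun k _ => mul_nonneg (hw k) (hp k i)
    _ = ∑ k, w k * shannonEntropy (p k) + shannonEntropy w := by
        simp only [negMulLog_mul, sum_add_distrib, shannonEntropy_eq_sum_negMulLog, mul_sum]
        rw [sum_comm, add_comm, sum_comm]
        simp [← sum_mul, hp1]

end ShannonEntropy

section OutcomeProbs

variable {ι n : Type*} [Fintype n] (M : ι → Matrix n n ℂ)

def outcomeProbs : Matrix n n ℂ →ₗ[ℝ] ι → ℝ where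
  toFun ρ i := (M i * ρ).trace.re
  map_add' ρ σ := by ext i; simp [Matrix.mul_add]
  map_smul' c ρ := by ext i; simp [Complex.real_smul]

@[simp]
lemma outcomeProbs_apply (ρ : Matrix n n ℂ) (i : ι) : outcomeProbs M ρ i = (M i * ρ).trace.re :=
  rfl

variable {M}

lemma outcomeProbs_nonneg (hM : ∀ i, (M i).PosSemidef) {ρ : Matrix n n ℂ} (hρ : ρ.PosSemidef)
    (i : ι) : 0 ≤ outcomeProbs M ρ i :=
  (Complex.nonneg_iff.1 ((hM i).trace_mul_nonneg hρ)).1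

lemma sum_outcomeProbs [Fintype ι] [DecidableEq n] (hM : ∑ i, M i = 1) (ρ : Matrix n n ℂ) :
    ∑ i, outcomeProbs M ρ i = ρ.trace.re := by
  simp [← Complex.re_sum, ← Matrix.trace_sum, ← sum_mul, hM]

lemma outcomeProbs_eq_zero_of_trace_re_eq_zero {i : ι} (hM : (M i).PosSemidef)
    (hV : (M i).trace.re = 0) (ρ : Matrix n n ℂ) : outcomeProbs M ρ i = 0 := by
  have htr : (M i).trace = 0 :=
    Complex.ext hV (Complex.nonneg_iff.1 hM.trace_nonneg).2.symm
  simp [hM.trace_eq_zero_iff.1 htr]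

lemma obsEntropy_eq_shannonEntropy_add [Fintype ι] (hM : ∀ i, (M i).PosSemidef)
    (ρ : Matrix n n ℂ) :
    obsEntropy M ρ = shannonEntropy (outcomeProbs M ρ) +
      ∑ i, outcomeProbs M ρ i * Real.log (M i).trace.re := by
  rw [obsEntropy, shannonEntropy, ← sum_neg_distrib, ← sum_neg_distrib, ← sum_add_distrib]
  refine sum_congr rfl fun i _ => ?_
  rw [← outcomeProbs_apply]
  by_cases hV : (M i).trace.re = 0
  · simp [outcomeProbs_eq_zero_of_trace_re_eq_zero (hM i) hV]
  by_cases hp : outcomeProbs M ρ i = 0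
  · simp [hp]
  rw [Real.log_div hp hV]
  ring

end OutcomeProbs

theorem obsEntropy_bounded_concavity {d K : ℕ} {ι : Type*} [Fintype ι]
    (M : ι → Matrix (Fin d) (Fin d) ℂ) (hM : IsPOVM M)
    (lam : Fin K → ℝ) (hlam0 : ∀ k, 0 ≤ lam k) (hlam1 : ∑ k, lam k = 1)
    (ρ : Fin K → Matrix (Fin d) (Fin d) ℂ) (hρ : ∀ k, IsState (ρ k)) :
    0 ≤ obsEntropy M (∑ k, lam k • ρ k) - ∑ k, lam k * obsEntropy M (ρ k) ∧
      obsEntropy M (∑ k, lam k • ρ k) - ∑ k, lam k * obsEntropy M (ρ k)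
        ≤ shannonEntropy lam := by
  obtain ⟨hMpsd, hMsum⟩ := hM
  set p := fun k => outcomeProbs M (ρ k)
  have hp0 : ∀ k i, 0 ≤ p k i := fun k => outcomeProbs_nonneg hMpsd (hρ k).1
  have hp1 : ∀ k, ∑ i, p k i = 1 := fun k => by
    rw [sum_outcomeProbs hMsum, (hρ k).2, Complex.one_re]
  have hgap : obsEntropy M (∑ k, lam k • ρ k) - ∑ k, lam k * obsEntropy M (ρ k) =
      shannonEntropy (∑ k, lam k • p k) - ∑ k, lam k * shannonEntropy (p k) := by
    simp only [obsEntropy_eq_shannonEntropy_add hMpsd, map_sum, map_smul, mul_add, sum_add_distrib,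
      Finset.sum_apply, Pi.smul_apply, smul_eq_mul, sum_mul, mul_sum, p]
    rw [sum_comm (γ := ι)]
    ring_nf
  rw [hgap, sub_nonneg, sub_le_iff_le_add']
  exact ⟨concaveOn_shannonEntropy.le_map_sum (fun k _ => hlam0 k) hlam1 fun k _ => hp0 k,
    shannonEntropy_sum_smul_le hlam0 hp0 hp1⟩
end
end

section
/- Let 𝓜 and 𝓝 be positive trace-preserving linear maps from d×d complex matrices to d'×d' complex matrices, let σ be a quantum state on ℂ^d, let λ = (λ_k)_{k=1}^K be a probability distribution, let ρ_k be quantum states, and set ρ = ∑_k λ_k ρ_k. Assume the support of 𝓜(ρ_k) is contained in the support of 𝓝(σ) for every k with λ_k > 0. Then 0 ≤ ∑_k λ_k D(𝓜(ρ_k)‖𝓝(σ)) − D(𝓜(ρ)‖𝓝(σ)) ≤ H(λ). -/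
open scoped BigOperators ComplexOrder Classical

noncomputable section

/-!
Write `μ_k = 𝓜 ρ_k` and `μ = ∑ λ_k μ_k`. The cross terms `tr(μ_k log 𝓝σ)` enter linearly, so they
cancel, and the quantity to bound is `∑ λ_k D(μ_k‖μ)`. Since `λ_k μ_k ≤ μ`, each `D(μ_k‖μ)` lies in
`[0, -log λ_k]`.

To prove both bounds, expand the traces in an eigenbasis `u_i` of `A` and an eigenbasis `v_j` of `M`.
This gives `tr(f(A) g(M)) = ∑ f(a_i) g(m_j) |⟨u_i, v_j⟩|²`. If `c A ≤ M`, the weights vanish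
wherever `a_i > 0` and `m_j = 0`, so the convention `log 0 = 0` never matters. Klein's inequality is
then the scalar bound `a (log a - log m) ≥ a - m`. The upper bound combines the tangent-line bound
`log m ≥ log (c a) + 1 - c a / m` with `c tr(A² M⁺) ≤ tr A`. That trace bound holds because, when
`0 ≤ B ≤ M` and `P = M⁺`,
`B - B P B = (P B)ᴴ (M - B) (P B) + (1 - P B)ᴴ B (1 - P B) ≥ 0`.
-/

theorem Matrix.continuousOn_spectrum_real {n 𝕜 : Type*} [Fintype n] [DecidableEq n] [RCLike 𝕜]
    (M : Matrix n n 𝕜) (f : ℝ → ℝ) : ContinuousOn f (spectrum ℝ M) :=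
  M.finite_real_spectrum.continuousOn f

theorem matLog_eq_cfc {n : Type*} [Fintype n] [DecidableEq n] {A : Matrix n n ℂ}
    (hA : A.IsHermitian) : matLog A = cfc Real.log A := by
  rw [matLog, dif_pos hA, hA.cfc_eq, Matrix.IsHermitian.cfc, Unitary.conjStarAlgAut_apply]
  rfl

namespace Matrix.IsHermitian

variable {n : Type*} [Fintype n] [DecidableEq n] {A B : Matrix n n ℂ}

def eigenOverlap (hA : A.IsHermitian) (hB : B.IsHermitian) (i j : n) : ℝ :=
  Complex.normSq ((star (hA.eigenvectorUnitary : Matrix n n ℂ) * hB.eigenvectorUnitary) i j)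

theorem trace_cfc_mul_cfc (hA : A.IsHermitian) (hB : B.IsHermitian) (f g : ℝ → ℝ) :
    (cfc f A * cfc g B).trace =
      ((∑ i, ∑ j, f (hA.eigenvalues i) * g (hB.eigenvalues j) * hA.eigenOverlap hB i j : ℝ) : ℂ) := by
  set U : Matrix n n ℂ := (hA.eigenvectorUnitary : Matrix n n ℂ)
  set V : Matrix n n ℂ := (hB.eigenvectorUnitary : Matrix n n ℂ)
  set W : Matrix n n ℂ := star U * V
  set Df : Matrix n n ℂ := diagonal (RCLike.ofReal ∘ f ∘ hA.eigenvalues)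
  set Dg : Matrix n n ℂ := diagonal (RCLike.ofReal ∘ g ∘ hB.eigenvalues)
  rw [hA.cfc_eq, hB.cfc_eq, IsHermitian.cfc, IsHermitian.cfc, Unitary.conjStarAlgAut_apply,
    Unitary.conjStarAlgAut_apply]
  calc (U * Df * star U * (V * Dg * star V)).trace
      = (U * (Df * W * Dg * star V)).trace := by simp only [W, mul_assoc]
    _ = (Df * W * Dg * star W).trace := by
        rw [trace_mul_comm]
        simp only [W, star_mul, star_star, mul_assoc]
    _ = _ := by
        simp only [trace, diag_apply, mul_apply (N := star W), Df, Dg, mul_diagonal, diagonal_mul,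
          star_apply]
        push_cast
        refine Finset.sum_congr rfl fun i _ => Finset.sum_congr rfl fun j _ => ?_
        rw [show hA.eigenOverlap hB i j = Complex.normSq (W i j) from rfl, ← Complex.mul_conj,
          Complex.star_def]
        simp only [Function.comp_apply, RCLike.ofReal_eq_complex_ofReal]
        ring

theorem trace_eq_sum_eigenOverlap_left (hA : A.IsHermitian) (hB : B.IsHermitian) :
    A.trace = ((∑ i, ∑ j, hA.eigenvalues i * hA.eigenOverlap hB i j : ℝ) : ℂ) := by
  have h := hA.trace_cfc_mul_cfc hB id 1
  rw [cfc_id ℝ A hA.isSelfAdjoint, Pi.one_def, cfc_const_one ℝ B, Matrix.mul_one] at h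
  simpa using h

theorem trace_eq_sum_eigenOverlap_right (hA : A.IsHermitian) (hB : B.IsHermitian) :
    B.trace = ((∑ i, ∑ j, hB.eigenvalues j * hA.eigenOverlap hB i j : ℝ) : ℂ) := by
  have h := hA.trace_cfc_mul_cfc hB 1 id
  rw [cfc_id ℝ B hB.isSelfAdjoint, Pi.one_def, cfc_const_one ℝ A, Matrix.one_mul] at h
  simpa using h

end Matrix.IsHermitian

theorem qRelEntropyR_eq_sum_eigenOverlap {n : Type*} [Fintype n] [DecidableEq n]
    {A B : Matrix n n ℂ} (hA : A.IsHermitian) (hB : B.IsHermitian) :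
    qRelEntropyR A B = ∑ i, ∑ j, hA.eigenvalues i *
      (Real.log (hA.eigenvalues i) - Real.log (hB.eigenvalues j)) * hA.eigenOverlap hB i j := by
  have hself : A * matLog A = cfc (fun x => x * Real.log x) A * cfc (fun _ => (1 : ℝ)) B := by
    rw [matLog_eq_cfc hA, cfc_const_one ℝ B, Matrix.mul_one, cfc_mul _ _ A
      (A.continuousOn_spectrum_real _) (A.continuousOn_spectrum_real _), cfc_id' ℝ A hA.isSelfAdjoint]
  have hcross : A * matLog B = cfc (id : ℝ → ℝ) A * cfc Real.log B := by
    rw [matLog_eq_cfc hB, cfc_id ℝ A hA.isSelfAdjoint]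
  rw [qRelEntropyR, Matrix.mul_sub, hself, hcross, Matrix.trace_sub, hA.trace_cfc_mul_cfc hB,
    hA.trace_cfc_mul_cfc hB, ← Complex.ofReal_sub, Complex.ofReal_re, ← Finset.sum_sub_distrib]
  refine Finset.sum_congr rfl fun i _ => ?_
  rw [← Finset.sum_sub_distrib]
  refine Finset.sum_congr rfl fun j _ => ?_
  simp only [id]
  ring

namespace Matrix.PosSemidef

variable {n : Type*} [Fintype n] [DecidableEq n] {A B M : Matrix n n ℂ}

theorem eigenvalues_mul_eigenOverlap_eq_zero (hA : A.PosSemidef) (hM : M.IsHermitian) {c : ℝ}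
    (hc : 0 < c) (hle : (M - c • A).PosSemidef) {j : n} (hj : hM.eigenvalues j = 0) (i : n) :
    hA.1.eigenvalues i * hA.1.eigenOverlap hM i j = 0 := by
  set z : ℝ → ℝ := fun x => if x = 0 then 1 else 0
  set Z := cfc z M
  have hZ : Zᴴ = Z := (cfc_predicate z M : IsSelfAdjoint Z)
  have hZZ : Z * Z = Z := by
    rw [← cfc_mul z z M (M.continuousOn_spectrum_real z) (M.continuousOn_spectrum_real z)]
    exact cfc_congr fun x _ => by by_cases hx : x = 0 <;> simp [z, hx]
  have hMZ : M * Z = 0 := by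
    conv_lhs => rw [← cfc_id' ℝ M]
    rw [← cfc_mul _ z M (M.continuousOn_spectrum_real _) (M.continuousOn_spectrum_real z)]
    exact (cfc_congr fun x _ => by by_cases hx : x = 0 <;> simp [z, hx]).trans (cfc_zero ℝ M)
  set S := ∑ i, ∑ j, hA.1.eigenvalues i * z (hM.eigenvalues j) * hA.1.eigenOverlap hM i j
  have hAZ : (A * Z).trace = (S : ℂ) := by
    conv_lhs => rw [← cfc_id' ℝ A hA.1.isSelfAdjoint]
    exact hA.1.trace_cfc_mul_cfc hM _ _
  have hterm_nonneg i j : 0 ≤ hA.1.eigenvalues i * z (hM.eigenvalues j) * hA.1.eigenOverlap hM i j :=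
    mul_nonneg (mul_nonneg (hA.eigenvalues_nonneg i) (by positivity)) (Complex.normSq_nonneg _)
  -- `0 ≤ tr (Z (M - c A) Z) = -c S`, while every term of `S` is nonnegative.
  have hS : S = 0 := by
    have h := (hle.conjTranspose_mul_mul_same Z).trace_nonneg
    rw [hZ, trace_mul_comm, ← Matrix.mul_assoc, hZZ, trace_mul_comm, Matrix.sub_mul, hMZ,
      zero_sub, trace_neg, smul_mul_assoc, trace_smul, hAZ, Complex.real_smul,
      ← Complex.ofReal_mul, ← Complex.ofReal_neg, Complex.zero_le_real] at h
    exact le_antisymm (by nlinarith) (Finset.sum_nonneg fun i _ =>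
      Finset.sum_nonneg fun j _ => hterm_nonneg i j)
  have hrow := (Finset.sum_eq_zero_iff_of_nonneg fun i _ =>
    Finset.sum_nonneg fun j _ => hterm_nonneg i j).mp hS i (Finset.mem_univ i)
  simpa [z, hj] using
    (Finset.sum_eq_zero_iff_of_nonneg fun j _ => hterm_nonneg i j).mp hrow j (Finset.mem_univ j)

theorem trace_mul_mul_cfc_inv_le (hB : B.PosSemidef) (hle : (M - B).PosSemidef) :
    (B * B * cfc (fun x : ℝ => x⁻¹) M).trace ≤ B.trace := by
  set P := cfc (fun x : ℝ => x⁻¹) M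
  have hP : Pᴴ = P := (cfc_predicate _ M : IsSelfAdjoint P)
  have hPMP : P * M * P = P := by
    have hM : IsSelfAdjoint M := by simpa using (hle.1.add hB.1).isSelfAdjoint
    conv_lhs => rw [← cfc_id' ℝ M hM]
    rw [← cfc_mul _ _ M (M.continuousOn_spectrum_real _) (M.continuousOn_spectrum_real _),
      ← cfc_mul _ _ M (M.continuousOn_spectrum_real _) (M.continuousOn_spectrum_real _)]
    exact cfc_congr fun x _ => by simpa using mul_inv_mul_cancel x⁻¹
  have hdecomp :
      B - B * P * B = (P * B)ᴴ * (M - B) * (P * B) + (1 - P * B)ᴴ * B * (1 - P * B) := by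
    rw [conjTranspose_mul, conjTranspose_sub, conjTranspose_one, conjTranspose_mul, hB.1.eq, hP]
    have : B * P * (M - B) * (P * B) + (1 - B * P) * B * (1 - P * B)
        = B - B * P * B + B * (P * M * P - P) * B := by noncomm_ring
    rw [this, hPMP, sub_self, Matrix.mul_zero, Matrix.zero_mul, add_zero]
  have := ((hle.conjTranspose_mul_mul_same (P * B)).add
    (hB.conjTranspose_mul_mul_same (1 - P * B))).trace_nonneg
  rwa [← hdecomp, trace_sub, sub_nonneg, trace_mul_comm, ← Matrix.mul_assoc] at this

end Matrix.PosSemidef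

theorem sub_mul_le_mul_log_sub_log_mul {a b w : ℝ} (ha : 0 ≤ a) (hb : 0 ≤ b) (hw : 0 ≤ w)
    (hsupp : b = 0 → a * w = 0) : (a - b) * w ≤ a * (Real.log a - Real.log b) * w := by
  rcases hb.eq_or_lt with rfl | hb
  · have h := hsupp rfl
    have rhs : a * (Real.log a - Real.log 0) * w = Real.log a * (a * w) := by
      rw [Real.log_zero]; ring
    rw [rhs, h, sub_zero, h, mul_zero]
  refine mul_le_mul_of_nonneg_right ?_ hw
  rcases ha.eq_or_lt with rfl | ha
  · simpa using hb.le
  have := Real.one_sub_inv_le_log_of_pos (div_pos ha hb)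
  rw [Real.log_div ha.ne' hb.ne', inv_div] at this
  have key : a * (Real.log a - Real.log b) - (a - b) =
      a * (Real.log a - Real.log b - (1 - b / a)) := by
    field_simp
  rw [← sub_nonneg, key]
  exact mul_nonneg ha.le (by linarith)

theorem mul_log_sub_log_mul_le {a m c w : ℝ} (ha : 0 ≤ a) (hm : 0 ≤ m) (hc : 0 < c) (hw : 0 ≤ w)
    (hsupp : m = 0 → a * w = 0) :
    a * (Real.log a - Real.log m) * w ≤
      -Real.log c * (a * w) + (c * (a ^ 2 * m⁻¹ * w) - a * w) := by
  rcases hm.eq_or_lt with rfl | hm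
  · have h := hsupp rfl
    have lhs : a * (Real.log a - Real.log 0) * w = Real.log a * (a * w) := by
      rw [Real.log_zero]; ring
    rw [lhs, h]
    simp
  rcases ha.eq_or_lt with rfl | ha
  · simp
  have hlog := Real.log_le_sub_one_of_pos (div_pos (mul_pos hc ha) hm)
  rw [Real.log_div (mul_pos hc ha).ne' hm.ne', Real.log_mul hc.ne' ha.ne'] at hlog
  have key : -Real.log c * (a * w) + (c * (a ^ 2 * m⁻¹ * w) - a * w) -
      a * (Real.log a - Real.log m) * w =
        (a * w) * (c * a / m - 1 - (Real.log c + Real.log a - Real.log m)) := by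
    field_simp
    ring
  rw [← sub_nonneg, key]
  exact mul_nonneg (mul_nonneg ha.le hw) (by linarith)

section RelativeEntropyBounds

variable {n : Type*} [Fintype n] [DecidableEq n] {A B : Matrix n n ℂ} {c : ℝ}

open Matrix

theorem trace_re_sub_trace_re_le_qRelEntropyR (hA : A.PosSemidef) (hc : 0 < c)
    (hle : (B - c • A).PosSemidef) : A.trace.re - B.trace.re ≤ qRelEntropyR A B := by
  have hB : B.PosSemidef := by simpa using hle.add (hA.smul hc.le)
  rw [hA.1.trace_eq_sum_eigenOverlap_left hB.1, hA.1.trace_eq_sum_eigenOverlap_right hB.1,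
    Complex.ofReal_re, Complex.ofReal_re, qRelEntropyR_eq_sum_eigenOverlap hA.1 hB.1,
    ← Finset.sum_sub_distrib]
  refine Finset.sum_le_sum fun i _ => ?_
  rw [← Finset.sum_sub_distrib]
  refine Finset.sum_le_sum fun j _ => ?_
  rw [← sub_mul]
  exact sub_mul_le_mul_log_sub_log_mul (hA.eigenvalues_nonneg i) (hB.eigenvalues_nonneg j)
    (Complex.normSq_nonneg _) (hA.eigenvalues_mul_eigenOverlap_eq_zero hB.1 hc hle · i)

theorem qRelEntropyR_le_neg_log_mul_trace_re (hA : A.PosSemidef) (hc : 0 < c)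
    (hle : (B - c • A).PosSemidef) : qRelEntropyR A B ≤ -Real.log c * A.trace.re := by
  have hB : B.PosSemidef := by simpa using hle.add (hA.smul hc.le)
  set a := hA.1.eigenvalues
  set b := hB.1.eigenvalues
  set w := hA.1.eigenOverlap hB.1
  have hT : c * ∑ i, ∑ j, a i ^ 2 * (b j)⁻¹ * w i j ≤ ∑ i, ∑ j, a i * w i j := by
    have h := (hA.smul hc.le).trace_mul_mul_cfc_inv_le hle
    rw [smul_mul_assoc, mul_smul_comm, smul_smul, smul_mul_assoc, trace_smul, trace_smul,
      ← sq A, ← cfc_pow_id (R := ℝ) A 2 hA.1.isSelfAdjoint, hA.1.trace_cfc_mul_cfc hB.1,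
      hA.1.trace_eq_sum_eigenOverlap_left hB.1, Complex.real_smul, Complex.real_smul,
      ← Complex.ofReal_mul, ← Complex.ofReal_mul, Complex.real_le_real] at h
    refine le_of_mul_le_mul_left ?_ hc
    linarith
  rw [qRelEntropyR_eq_sum_eigenOverlap hA.1 hB.1, hA.1.trace_eq_sum_eigenOverlap_left hB.1,
    Complex.ofReal_re]
  calc ∑ i, ∑ j, a i * (Real.log (a i) - Real.log (b j)) * w i j
      ≤ ∑ i, ∑ j, (-Real.log c * (a i * w i j) + (c * (a i ^ 2 * (b j)⁻¹ * w i j) - a i * w i j)) :=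
        Finset.sum_le_sum fun i _ => Finset.sum_le_sum fun j _ =>
          mul_log_sub_log_mul_le (hA.eigenvalues_nonneg i) (hB.eigenvalues_nonneg j) hc
            (Complex.normSq_nonneg _) (hA.eigenvalues_mul_eigenOverlap_eq_zero hB.1 hc hle · i)
    _ = -Real.log c * ∑ i, ∑ j, a i * w i j +
          (c * ∑ i, ∑ j, a i ^ 2 * (b j)⁻¹ * w i j - ∑ i, ∑ j, a i * w i j) := by
        simp only [Finset.sum_add_distrib, Finset.sum_sub_distrib, Finset.mul_sum]
    _ ≤ -Real.log c * ∑ i, ∑ j, a i * w i j := by linarith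

end RelativeEntropyBounds

section Mixture

variable {ι n : Type*} [Fintype ι] [Fintype n] [DecidableEq n]

open Matrix

theorem re_trace_sum_smul_mul (lam : ι → ℝ) (μ : ι → Matrix n n ℂ) (L : Matrix n n ℂ) :
    ((∑ k, lam k • μ k) * L).trace.re = ∑ k, lam k * (μ k * L).trace.re := by
  simp only [Finset.sum_mul, trace_sum, Complex.re_sum, smul_mul_assoc, trace_smul,
    Complex.smul_re, smul_eq_mul]

theorem sum_mul_qRelEntropyR_sub_qRelEntropyR (lam : ι → ℝ) (μ : ι → Matrix n n ℂ)
    (ν : Matrix n n ℂ) :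
    (∑ k, lam k * qRelEntropyR (μ k) ν) - qRelEntropyR (∑ k, lam k • μ k) ν =
      ∑ k, lam k * qRelEntropyR (μ k) (∑ k, lam k • μ k) := by
  have h (X L : Matrix n n ℂ) :
      qRelEntropyR X L = (X * matLog X).trace.re - (X * matLog L).trace.re := by
    rw [qRelEntropyR, Matrix.mul_sub, trace_sub, Complex.sub_re]
  simp only [h, re_trace_sum_smul_mul, mul_sub, Finset.sum_sub_distrib]
  ring

theorem qRelEntropyR_component_mixture_mem_Icc {lam : ι → ℝ} (hlam0 : ∀ k, 0 ≤ lam k)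
    (hlam1 : ∑ k, lam k = 1) {μ : ι → Matrix n n ℂ} (hμ : ∀ k, (μ k).PosSemidef)
    (htr : ∀ k, (μ k).trace.re = 1) {k : ι} (hk : 0 < lam k) :
    qRelEntropyR (μ k) (∑ i, lam i • μ i) ∈ Set.Icc 0 (-Real.log (lam k)) := by
  have hle : (∑ i, lam i • μ i - lam k • μ k).PosSemidef := by
    rw [← Finset.sum_erase_eq_sub (Finset.mem_univ k)]
    exact posSemidef_sum _ fun i _ => (hμ i).smul (hlam0 i)
  have htr_mix : (∑ i, lam i • μ i).trace.re = 1 := by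
    rw [← Matrix.mul_one (∑ i, lam i • μ i), re_trace_sum_smul_mul]
    simp [htr, hlam1]
  constructor
  · have := trace_re_sub_trace_re_le_qRelEntropyR (hμ k) hk hle
    rwa [htr, htr_mix, sub_self] at this
  · simpa [htr] using qRelEntropyR_le_neg_log_mul_trace_re (hμ k) hk hle

end Mixture

theorem relEntropy_bounded_concavity_general {dI dO K : ℕ}
    (𝓜 𝓝 : Matrix (Fin dI) (Fin dI) ℂ →ₗ[ℂ] Matrix (Fin dO) (Fin dO) ℂ)
    (h𝓜pos : ∀ X : Matrix (Fin dI) (Fin dI) ℂ, X.PosSemidef → (𝓜 X).PosSemidef)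
    (h𝓜tr : ∀ X : Matrix (Fin dI) (Fin dI) ℂ, (𝓜 X).trace = X.trace)
    (σ : Matrix (Fin dI) (Fin dI) ℂ)
    (lam : Fin K → ℝ) (hlam0 : ∀ k, 0 ≤ lam k) (hlam1 : ∑ k, lam k = 1)
    (ρs : Fin K → Matrix (Fin dI) (Fin dI) ℂ) (hρs : ∀ k, IsState (ρs k)) :
    0 ≤ (∑ k, lam k * qRelEntropyR (𝓜 (ρs k)) (𝓝 σ))
        - qRelEntropyR (𝓜 (∑ k, lam k • ρs k)) (𝓝 σ) ∧
      (∑ k, lam k * qRelEntropyR (𝓜 (ρs k)) (𝓝 σ))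
        - qRelEntropyR (𝓜 (∑ k, lam k • ρs k)) (𝓝 σ) ≤ shannonEntropy lam := by
  have hmix : 𝓜 (∑ k, lam k • ρs k) = ∑ k, lam k • 𝓜 (ρs k) := by
    simp only [map_sum, LinearMap.map_smul_of_tower]
  have hbounds k (hk : 0 < lam k) := qRelEntropyR_component_mixture_mem_Icc hlam0 hlam1
    (fun k => h𝓜pos _ (hρs k).1) (fun k => by rw [h𝓜tr, (hρs k).2, Complex.one_re]) hk
  rw [hmix, sum_mul_qRelEntropyR_sub_qRelEntropyR, shannonEntropy, ← Finset.sum_neg_distrib]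
  constructor
  · refine Finset.sum_nonneg fun k _ => ?_
    rcases (hlam0 k).eq_or_lt with hk | hk
    · simp [← hk]
    · exact mul_nonneg hk.le (hbounds k hk).1
  · refine Finset.sum_le_sum fun k _ => ?_
    rcases (hlam0 k).eq_or_lt with hk | hk
    · simp [← hk]
    · rw [← mul_neg]
      exact mul_le_mul_of_nonneg_left (hbounds k hk).2 hk.le

theorem relEntropy_bounded_concavity {dI dO K : ℕ}
    (𝓜 𝓝 : Matrix (Fin dI) (Fin dI) ℂ →ₗ[ℂ] Matrix (Fin dO) (Fin dO) ℂ)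
    (h𝓜pos : ∀ X : Matrix (Fin dI) (Fin dI) ℂ, X.PosSemidef → (𝓜 X).PosSemidef)
    (h𝓜tr : ∀ X : Matrix (Fin dI) (Fin dI) ℂ, (𝓜 X).trace = X.trace)
    (h𝓝pos : ∀ X : Matrix (Fin dI) (Fin dI) ℂ, X.PosSemidef → (𝓝 X).PosSemidef)
    (h𝓝tr : ∀ X : Matrix (Fin dI) (Fin dI) ℂ, (𝓝 X).trace = X.trace)
    (σ : Matrix (Fin dI) (Fin dI) ℂ) (hσ : IsState σ)
    (lam : Fin K → ℝ) (hlam0 : ∀ k, 0 ≤ lam k) (hlam1 : ∑ k, lam k = 1)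
    (ρs : Fin K → Matrix (Fin dI) (Fin dI) ℂ) (hρs : ∀ k, IsState (ρs k))
    (hsupp : ∀ k, 0 < lam k →
      LinearMap.range (Matrix.toLin' (𝓜 (ρs k))) ≤ LinearMap.range (Matrix.toLin' (𝓝 σ))) :
    0 ≤ (∑ k, lam k * qRelEntropyR (𝓜 (ρs k)) (𝓝 σ))
        - qRelEntropyR (𝓜 (∑ k, lam k • ρs k)) (𝓝 σ) ∧
      (∑ k, lam k * qRelEntropyR (𝓜 (ρs k)) (𝓝 σ))
        - qRelEntropyR (𝓜 (∑ k, lam k • ρs k)) (𝓝 σ) ≤ shannonEntropy lam :=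
  relEntropy_bounded_concavity_general 𝓜 𝓝 h𝓜pos h𝓜tr σ lam hlam0 hlam1 ρs hρs
end
end
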